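/- Let ((A,μ),(M,l,r),T) be a relative Rota–Baxter algebra over a field K of characteristic 0 and let μ₁ : A×A → A, l₁ : A×M → M, r₁ : M×A → M be bilinear and T₁ : M → A linear. Then the K[ε]-extensions (A[ε], μ+εμ₁), (M[ε], l+εl₁, r+εr₁), T+εT₁ form a relative Rota–Baxter algebra over K[ε] (i.e. the quadruple (μ₁,l₁,r₁,T₁) determines an infinitesimal deformation) if and only if all of the following identities hold: (1) μ₁(a,bc) + a·μ₁(b,c) = μ₁(ab,c) + μ₁(a,b)·c for all a,b,c ∈ A; (2) l₁(ab,m) + μ₁(a,b)m = l₁(a,bm) + a·l₁(b,m), r₁(ma,b) + r₁(m,a)b = r₁(m,ab) + m·μ₁(a,b), and l₁(a,m)b + r₁(am,b) = l₁(a,mb) + a·r₁(m,b) for all a,b ∈ A, m ∈ M; (3) μ₁(T(m),T(n)) − T( l₁(T(m),n) + r₁(m,T(n)) ) = T₁( T(m)n + mT(n) ) + T( T₁(m)n + mT₁(n) ) − T₁(m)T(n) − T(m)T₁(n) for all m,n ∈ M. (These identities say exactly that (μ₁+l₁+r₁, T₁) is a 2-cocycle in the cohomology of the relative Rota–Baxter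 algebra.) -/
import Mathlib


/-!
Statement 10: the quadruple `(μ₁, l₁, r₁, T₁)` determines an infinitesimal deformation of
the relative Rota–Baxter algebra `((A,μ),(M,l,r),T)` — i.e. the `ε`-extensions form a
relative Rota–Baxter algebra over `K[ε]` — iff the identities (1), (2), (3) hold
(i.e. `(μ₁+l₁+r₁, T₁)` is a 2-cocycle).
-/

section

variable {K : Type*} [Field K] [CharZero K]
variable {A : Type*} [NonUnitalRing A] [Module K A] [SMulCommClass K A A] [IsScalarTower K A A]
variable {M : Type*} [AddCommGroup M] [Module K M]

/-- The `K[ε]`-bilinear extension of `μ + εμ₁` on `A[ε] = A × A`. -/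
def dMul (μ₁ : A →ₗ[K] A →ₗ[K] A) : A × A → A × A → A × A :=
  fun x y => (x.1 * y.1, x.1 * y.2 + x.2 * y.1 + μ₁ x.1 y.1)

/-- The `K[ε]`-bilinear extension of the left action `l + εl₁`. -/
def dL (l l₁ : A →ₗ[K] M →ₗ[K] M) : A × A → M × M → M × M :=
  fun x u => (l x.1 u.1, l x.1 u.2 + l x.2 u.1 + l₁ x.1 u.1)

/-- The `K[ε]`-bilinear extension of the right action `r + εr₁`. -/
def dR (r r₁ : M →ₗ[K] A →ₗ[K] M) : M × M → A × A → M × M :=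
  fun u x => (r u.1 x.1, r u.2 x.1 + r u.1 x.2 + r₁ u.1 x.1)

/-- The `K[ε]`-linear extension of `T + εT₁ : M[ε] → A[ε]`. -/
def dOp (T T₁ : M →ₗ[K] A) : M × M → A × A :=
  fun u => (T u.1, T u.2 + T₁ u.1)

theorem statement10
    (l : A →ₗ[K] M →ₗ[K] M) (r : M →ₗ[K] A →ₗ[K] M) (T : M →ₗ[K] A)
    -- M is an A-bimodule:
    (hl : ∀ (a b : A) (m : M), l (a * b) m = l a (l b m))
    (hr : ∀ (m : M) (a b : A), r (r m a) b = r m (a * b))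
    (hlr : ∀ (a : A) (m : M) (b : A), r (l a m) b = l a (r m b))
    -- T is a relative Rota–Baxter operator:
    (hT : ∀ m n : M, T m * T n = T (l (T m) n + r m (T n)))
    (μ₁ : A →ₗ[K] A →ₗ[K] A) (l₁ : A →ₗ[K] M →ₗ[K] M) (r₁ : M →ₗ[K] A →ₗ[K] M)
    (T₁ : M →ₗ[K] A) :
    -- the ε-extensions form a relative Rota–Baxter algebra over K[ε] ...
    ((∀ x y z : A × A, dMul μ₁ (dMul μ₁ x y) z = dMul μ₁ x (dMul μ₁ y z)) ∧
      (∀ (x y : A × A) (u : M × M), dL l l₁ (dMul μ₁ x y) u = dL l l₁ x (dL l l₁ y u)) ∧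
      (∀ (u : M × M) (x y : A × A), dR r r₁ (dR r r₁ u x) y = dR r r₁ u (dMul μ₁ x y)) ∧
      (∀ (x : A × A) (u : M × M) (y : A × A),
        dR r r₁ (dL l l₁ x u) y = dL l l₁ x (dR r r₁ u y)) ∧
      (∀ u v : M × M,
        dMul μ₁ (dOp T T₁ u) (dOp T T₁ v)
          = dOp T T₁ (dL l l₁ (dOp T T₁ u) v + dR r r₁ u (dOp T T₁ v))))
    -- ... iff the identities (1), (2), (3) hold:
    ↔ ((∀ a b c : A, μ₁ a (b * c) + a * μ₁ b c = μ₁ (a * b) c + μ₁ a b * c) ∧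
        (∀ (a b : A) (m : M), l₁ (a * b) m + l (μ₁ a b) m = l₁ a (l b m) + l a (l₁ b m)) ∧
        (∀ (m : M) (a b : A), r₁ (r m a) b + r (r₁ m a) b = r₁ m (a * b) + r m (μ₁ a b)) ∧
        (∀ (a : A) (m : M) (b : A),
          r (l₁ a m) b + r₁ (l a m) b = l₁ a (r m b) + l a (r₁ m b)) ∧
        (∀ m n : M,
          μ₁ (T m) (T n) - T (l₁ (T m) n + r₁ m (T n))
            = T₁ (l (T m) n + r m (T n)) + T (l (T₁ m) n + r m (T₁ n))
              - T₁ m * T n - T m * T₁ n)) := by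
  constructor
  · rintro ⟨h1, h2, h3, h4, h5⟩
    refine ⟨fun a b c => ?_, fun a b m => ?_, fun m a b => ?_, fun a m b => ?_, fun m n => ?_⟩
    · have h := (Prod.ext_iff.mp (h1 (a, 0) (b, 0) (c, 0))).2
      simp only [dMul, mul_zero, zero_mul, add_zero, zero_add, map_zero,
        LinearMap.zero_apply] at h
      try simp only [map_add] at h ⊢
      rw [← sub_eq_zero] at h ⊢
      first
      | (rw [← h]; abel1)
      | (rw [← neg_eq_zero]; rw [← h]; abel1)
    · have h := (Prod.ext_iff.mp (h2 (a, 0) (b, 0) (m, 0))).2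
      simp only [dMul, dL, mul_zero, zero_mul, add_zero, zero_add, map_zero,
        LinearMap.zero_apply] at h
      try simp only [map_add] at h ⊢
      rw [← sub_eq_zero] at h ⊢
      first
      | (rw [← h]; abel1)
      | (rw [← neg_eq_zero]; rw [← h]; abel1)
    · have h := (Prod.ext_iff.mp (h3 (m, 0) (a, 0) (b, 0))).2
      simp only [dMul, dR, mul_zero, zero_mul, add_zero, zero_add, map_zero,
        LinearMap.zero_apply] at h
      try simp only [map_add] at h ⊢
      rw [← sub_eq_zero] at h ⊢
      first
      | (rw [← h]; abel1)
      | (rw [← neg_eq_zero]; rw [← h]; abel1)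
    · have h := (Prod.ext_iff.mp (h4 (a, 0) (m, 0) (b, 0))).2
      simp only [dL, dR, mul_zero, zero_mul, add_zero, zero_add, map_zero,
        LinearMap.zero_apply] at h
      try simp only [map_add] at h ⊢
      rw [← sub_eq_zero] at h ⊢
      first
      | (rw [← h]; abel1)
      | (rw [← neg_eq_zero]; rw [← h]; abel1)
    · have h := (Prod.ext_iff.mp (h5 (m, 0) (n, 0))).2
      simp only [dMul, dL, dR, dOp, Prod.fst_add, Prod.snd_add, mul_zero, zero_mul,
        add_zero, zero_add, map_zero, map_add, LinearMap.zero_apply] at h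
      try simp only [map_add] at h ⊢
      rw [← sub_eq_zero] at h ⊢
      first
      | (rw [← h]; abel1)
      | (rw [← neg_eq_zero]; rw [← h]; abel1)
  · rintro ⟨h1, h2, h3, h4, h5⟩
    refine ⟨fun x y z => ?_, fun x y u => ?_, fun u x y => ?_, fun x u y => ?_, fun u v => ?_⟩
    · refine Prod.ext (mul_assoc _ _ _) ?_
      have h := h1 x.1 y.1 z.1
      simp only [dMul, map_add, LinearMap.add_apply, mul_add, add_mul, mul_assoc]
      try simp only [map_add] at h ⊢
      rw [← sub_eq_zero] at h ⊢
      first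
      | (rw [← h]; abel1)
      | (rw [← neg_eq_zero]; rw [← h]; abel1)
    · refine Prod.ext (hl _ _ _) ?_
      have h := h2 x.1 y.1 u.1
      simp only [dMul, dL, map_add, LinearMap.add_apply, hl]
      try simp only [map_add] at h ⊢
      rw [← sub_eq_zero] at h ⊢
      first
      | (rw [← h]; abel1)
      | (rw [← neg_eq_zero]; rw [← h]; abel1)
    · refine Prod.ext (hr _ _ _) ?_
      have h := h3 u.1 x.1 y.1
      simp only [dMul, dR, map_add, LinearMap.add_apply, hr]
      try simp only [map_add] at h ⊢
      rw [← sub_eq_zero] at h ⊢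
      first
      | (rw [← h]; abel1)
      | (rw [← neg_eq_zero]; rw [← h]; abel1)
    · refine Prod.ext (hlr _ _ _) ?_
      have h := h4 x.1 u.1 y.1
      simp only [dL, dR, map_add, LinearMap.add_apply, hlr]
      try simp only [map_add] at h ⊢
      rw [← sub_eq_zero] at h ⊢
      first
      | (rw [← h]; abel1)
      | (rw [← neg_eq_zero]; rw [← h]; abel1)
    · refine Prod.ext (hT _ _) ?_
      have h := h5 u.1 v.1
      simp only [dMul, dL, dR, dOp, Prod.fst_add, Prod.snd_add, map_add,
        LinearMap.add_apply, mul_add, add_mul, hT]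
      try simp only [map_add] at h ⊢
      rw [← sub_eq_zero] at h ⊢
      first
      | (rw [← h]; abel1)
      | (rw [← neg_eq_zero]; rw [← h]; abel1)

end
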